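/- arXiv:1204.2001 — 5 statements merged into one kernel-verified Lean document; each statement's English description precedes it below -/
import Mathlib

section
/- Let p > 3 be prime, r odd coprime to p, d = p^n+1, m | n with n/m odd, d' = p^m+1, e = d/d', and a = t^d in F_p(t). Then (x,y) = (t^e, t^{e(r+1)/2}(t^{re}+1)^{d'/2}) satisfies y^2 = x(x^r+1)(x^r+a^r) over F_p(t). -/
/-!
Write `q = p ^ m`, so that `d = e * (q + 1)`, and put `u = x ^ r`. Then `a ^ r = u ^ (q + 1)`, and
Frobenius gives `x ^ r + a ^ r = u * (1 + u ^ q) = u * (1 + u) ^ q`. Hence the right-hand side is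
`x * u * (1 + u) ^ (q + 1) = (x ^ ((r + 1) / 2) * (1 + u) ^ ((q + 1) / 2)) ^ 2`, the halved
exponents being integers because `r` and `q` are odd.
-/

theorem pow_add_one_dvd_pow_add_one (a : ℕ) {m n : ℕ} (hmn : m ∣ n) (hodd : Odd (n / m)) :
    a ^ m + 1 ∣ a ^ n + 1 := by
  simpa only [one_pow, ← pow_mul, Nat.mul_div_cancel' hmn] using
    hodd.nat_add_dvd_pow_add_pow (a ^ m) 1

theorem add_pow_expChar_pow_succ {R : Type*} [CommSemiring R] (p : ℕ) [ExpChar R p] (k : ℕ)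
    (u : R) : u + u ^ (p ^ k + 1) = u * (u + 1) ^ p ^ k := by
  rw [add_pow_expChar_pow, one_pow, mul_add, mul_one, pow_succ', add_comm]

theorem sq_eq_mul_add_pow_expChar_pow_succ {R : Type*} [CommSemiring R] {p : ℕ} [ExpChar R p]
    (hp : Odd p) {r : ℕ} (hr : Odd r) (k : ℕ) (x : R) :
    (x ^ ((r + 1) / 2) * (x ^ r + 1) ^ ((p ^ k + 1) / 2)) ^ 2 =
      x * (x ^ r + 1) * (x ^ r + (x ^ (p ^ k + 1)) ^ r) := by
  have hr2 : (r + 1) / 2 * 2 = r + 1 := Nat.div_mul_cancel hr.add_one.two_dvd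
  have hq2 : (p ^ k + 1) / 2 * 2 = p ^ k + 1 := Nat.div_mul_cancel hp.pow.add_one.two_dvd
  rw [← pow_mul, mul_comm (p ^ k + 1) r, pow_mul x r, add_pow_expChar_pow_succ p k (x ^ r),
    mul_pow, ← pow_mul, ← pow_mul, hr2, hq2]
  ring

theorem stmt2_general (p : ℕ) [Fact p.Prime] (hp : 3 < p) (r : ℕ) (hr : Odd r)
    (m n : ℕ) (hmn : m ∣ n) (hodd : Odd (n / m)) :
    let K := RatFunc (ZMod p)
    let t : K := RatFunc.X
    let d := p ^ n + 1
    let d' := p ^ m + 1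
    let e := d / d'
    let a : K := t ^ d
    let x : K := t ^ e
    let y : K := t ^ (e * (r + 1) / 2) * (t ^ (r * e) + 1) ^ (d' / 2)
    y ^ 2 = x * (x ^ r + 1) * (x ^ r + a ^ r) := by
  intro K t d d' e a x y
  have hp_odd : Odd p := (Fact.out : p.Prime).odd_of_ne_two (by omega)
  have hd : d = e * d' := (Nat.div_mul_cancel (pow_add_one_dvd_pow_add_one p hmn hodd)).symm
  have hy : y = x ^ ((r + 1) / 2) * (x ^ r + 1) ^ ((p ^ m + 1) / 2) := by
    simp only [y, x, ← pow_mul, Nat.mul_div_assoc e hr.add_one.two_dvd, mul_comm r e, d']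
  have ha : a = x ^ (p ^ m + 1) := by
    simp only [a, x, ← pow_mul, hd, d']
  rw [hy, ha]
  exact sq_eq_mul_add_pow_expChar_pow_succ hp_odd hr m x

/-- Let `p > 3` be prime, `r` odd coprime to `p`, `d = p^n + 1`, `m ∣ n` with
`n/m` odd, `d' = p^m + 1`, `e = d/d'`, and `a = t^d` in `F_p(t)`.  Then
`(x, y) = (t^e, t^(e(r+1)/2) * (t^(re) + 1)^(d'/2))` satisfies
`y^2 = x * (x^r + 1) * (x^r + a^r)`. -/
theorem stmt2 (p : ℕ) [Fact p.Prime] (hp : 3 < p) (r : ℕ) (hr : Odd r)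
    (hrp : Nat.Coprime r p) (m n : ℕ) (hm : 0 < m) (hmn : m ∣ n)
    (hodd : Odd (n / m)) :
    let K := RatFunc (ZMod p)
    let t : K := RatFunc.X
    let d := p ^ n + 1
    let d' := p ^ m + 1
    let e := d / d'
    let a : K := t ^ d
    let x : K := t ^ e
    let y : K := t ^ (e * (r + 1) / 2) * (t ^ (r * e) + 1) ^ (d' / 2)
    y ^ 2 = x * (x ^ r + 1) * (x ^ r + a ^ r) :=
  stmt2_general p hp r hr m n hmn hodd
end

section
/- Let p > 3 be prime, r odd coprime to p, and a ∈ F_p(t) \ F_p. For each positive integer N there exists a ∈ F_p(t) \ F_p such that the curve y^2 = x(x^r+1)(x^r+a^r) has at least N distinct F_p(t)-rational affine points. -/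
/-!
Take `a = t ^ (p ^ n + 1)` with `n = 3 ^ N`. For `q = p ^ m` and any `x`, Frobenius gives
`x ^ r + (x ^ (q + 1)) ^ r = x ^ r (x ^ r + 1) ^ q`, so
`x (x ^ r + 1) (x ^ r + (x ^ (q + 1)) ^ r) = x ^ (r + 1) (x ^ r + 1) ^ (q + 1)` is a square
when `p` and `r` are odd. For each of the `N` divisors `m = 3 ^ k` of `n`, `n / m` is odd, so
`p ^ m + 1 ∣ p ^ n + 1` and `x = t ^ ((p ^ n + 1) / (p ^ m + 1))` satisfies `x ^ (q + 1) = a`;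
these `x` are distinct powers of `t`.
-/

open RatFunc

theorem curve_sq_eq_of_expChar {R : Type*} [CommRing R] {p : ℕ} [ExpChar R p] (hp : Odd p)
    {r : ℕ} (hr : Odd r) (m : ℕ) (x : R) :
    (x ^ ((r + 1) / 2) * (x ^ r + 1) ^ ((p ^ m + 1) / 2)) ^ 2 =
      x * (x ^ r + 1) * (x ^ r + (x ^ (p ^ m + 1)) ^ r) := by
  have frobenius : x ^ r + (x ^ (p ^ m + 1)) ^ r = x ^ r * (x ^ r + 1) ^ p ^ m := by
    rw [add_pow_expChar_pow, one_pow, ← pow_mul, ← pow_mul]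
    ring
  rw [frobenius, mul_pow, ← pow_mul, ← pow_mul, Nat.div_mul_cancel hr.add_one.two_dvd,
    Nat.div_mul_cancel hp.pow.add_one.two_dvd]
  ring

theorem pow_add_one_dvd_pow_mul_add_one (a m : ℕ) {d : ℕ} (hd : Odd d) :
    a ^ m + 1 ∣ a ^ (m * d) + 1 := by
  simpa only [one_pow, pow_mul] using hd.nat_add_dvd_pow_add_pow (a ^ m) 1

theorem Nat.injOn_div_setOf_dvd {c : ℕ} (hc : c ≠ 0) : Set.InjOn (c / ·) {d | d ∣ c} :=
  fun a ha b hb hab => by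
    rw [← Nat.div_div_self ha hc, ← Nat.div_div_self hb hc]
    exact congrArg (c / ·) hab

namespace RatFunc

variable {K : Type*} [Field K]

@[simp]
theorem intDegree_X_pow (n : ℕ) : intDegree (X ^ n : RatFunc K) = n := by
  rw [← algebraMap_X, ← map_pow, intDegree_polynomial, Polynomial.natDegree_X_pow]

theorem X_pow_injective : Function.Injective (X ^ · : ℕ → RatFunc K) :=
  fun a b h => by simpa using congrArg intDegree h

theorem X_pow_notMem_range_algebraMap {n : ℕ} (hn : n ≠ 0) :
    (X ^ n : RatFunc K) ∉ Set.range (algebraMap K (RatFunc K)) := by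
  rintro ⟨c, hc⟩
  have hdeg := congrArg intDegree hc
  rw [algebraMap_eq_C, intDegree_C, intDegree_X_pow] at hdeg
  exact hn (by exact_mod_cast hdeg.symm)

end RatFunc

theorem stmt3_general (p : ℕ) [Fact p.Prime] (hp : 3 < p) (r : ℕ) (hr : Odd r)
    (N : ℕ) :
    ∃ a : RatFunc (ZMod p),
      a ∉ Set.range (algebraMap (ZMod p) (RatFunc (ZMod p))) ∧
      ∃ S : Finset (RatFunc (ZMod p) × RatFunc (ZMod p)),
        N ≤ S.card ∧
        ∀ q ∈ S, q.2 ^ 2 = q.1 * (q.1 ^ r + 1) * (q.1 ^ r + a ^ r) := by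
  classical
  have hp_odd : Odd p := (Fact.out : p.Prime).odd_of_ne_two (by omega)
  have : CharP (RatFunc (ZMod p)) p :=
    charP_of_injective_algebraMap (algebraMap (ZMod p) (RatFunc (ZMod p))).injective p
  set c := p ^ 3 ^ N + 1
  have hdvd : ∀ k < N, p ^ 3 ^ k + 1 ∣ c := fun k hk => by
    simpa only [← pow_add, Nat.add_sub_cancel' hk.le] using
      pow_add_one_dvd_pow_mul_add_one p (3 ^ k) (Odd.pow (n := N - k) (by decide : Odd 3))
  let point (k : ℕ) : RatFunc (ZMod p) × RatFunc (ZMod p) :=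
    let x : RatFunc (ZMod p) := X ^ (c / (p ^ 3 ^ k + 1))
    (x, x ^ ((r + 1) / 2) * (x ^ r + 1) ^ ((p ^ 3 ^ k + 1) / 2))
  refine ⟨X ^ c, X_pow_notMem_range_algebraMap (by positivity), (Finset.range N).image point,
    ?_, ?_⟩
  · have hinj : Set.InjOn point (Finset.range N) := fun k hk j hj hkj => by
      simp only [Finset.coe_range, Set.mem_Iio] at hk hj
      have hq := Nat.injOn_div_setOf_dvd (by positivity) (hdvd k hk) (hdvd j hj)
        (X_pow_injective (congrArg Prod.fst hkj))
      exact Nat.pow_right_injective (by norm_num : 2 ≤ 3) <|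
        Nat.pow_right_injective (by omega : 2 ≤ p) (Nat.add_right_cancel hq)
    rw [Finset.card_image_of_injOn hinj, Finset.card_range]
  · simp only [Finset.mem_image, Finset.mem_range]
    rintro _ ⟨k, hk, rfl⟩
    have hc : X ^ c = (X ^ (c / (p ^ 3 ^ k + 1)) : RatFunc (ZMod p)) ^ (p ^ 3 ^ k + 1) := by
      rw [← pow_mul, Nat.div_mul_cancel (hdvd k hk)]
    rw [hc]
    exact curve_sq_eq_of_expChar hp_odd hr (3 ^ k) _

/-- Let `p > 3` be prime and `r` odd coprime to `p`.  For each positive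
integer `N` there exists a non-constant `a ∈ F_p(t)` such that the curve
`y^2 = x (x^r + 1)(x^r + a^r)` has at least `N` distinct `F_p(t)`-rational
affine points. -/
theorem stmt3 (p : ℕ) [Fact p.Prime] (hp : 3 < p) (r : ℕ) (hr : Odd r)
    (hrp : Nat.Coprime r p) (N : ℕ) (hN : 0 < N) :
    ∃ a : RatFunc (ZMod p),
      a ∉ Set.range (algebraMap (ZMod p) (RatFunc (ZMod p))) ∧
      ∃ S : Finset (RatFunc (ZMod p) × RatFunc (ZMod p)),
        N ≤ S.card ∧
        ∀ q ∈ S, q.2 ^ 2 = q.1 * (q.1 ^ r + 1) * (q.1 ^ r + a ^ r) :=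
  stmt3_general p hp r hr N
end

section
/- If n is odd, then every divisor m of n satisfies that n/m is odd; consequently for odd n with k distinct divisors, there are k distinct F_p(t)-rational points on y^2 = x(x^r+1)(x^r+t^{r(p^n+1)}). -/
/-!
For `m ∣ n` with `n` odd, `e = (p^n + 1)/(p^m + 1)` is an integer and `u = t^e` satisfies
`t^(r(p^n+1)) = u^(r(p^m+1))`. Since `p^m` is a power of the characteristic,
`(u^r + 1)^(p^m) = u^(r p^m) + 1`, so `u (u^r + 1)(u^r + u^(r(p^m+1))) = u^(r+1) (u^r + 1)^(p^m+1)`,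
a square because `r` and `p` are odd. Distinct divisors give distinct exponents `e`.
-/

lemma pow_add_one_dvd_pow_add_one_of_odd_div {a m n : ℕ} (hmn : m ∣ n) (hodd : Odd (n / m)) :
    a ^ m + 1 ∣ a ^ n + 1 := by
  simpa [← pow_mul, Nat.mul_div_cancel' hmn] using hodd.nat_add_dvd_pow_add_pow (a ^ m) 1

lemma RatFunc.X_pow_injective_s5 (K : Type*) [Field K] :
    Function.Injective fun k : ℕ => (RatFunc.X : RatFunc K) ^ k := by
  intro a b hab
  simp only [← RatFunc.algebraMap_X (K := K), ← map_pow] at hab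
  simpa using congrArg Polynomial.natDegree (RatFunc.algebraMap_injective K hab)

lemma sq_eq_mul_pow_add_one_mul_pow_add_pow_expChar_pow {R : Type*} [CommSemiring R] {p : ℕ}
    [ExpChar R p] (hp : Odd p) {r : ℕ} (hr : Odd r) (m : ℕ) (u : R) :
    (u ^ ((r + 1) / 2) * (u ^ r + 1) ^ ((p ^ m + 1) / 2)) ^ 2
      = u * (u ^ r + 1) * (u ^ r + u ^ (r * (p ^ m + 1))) := by
  have hr2 : (r + 1) / 2 * 2 = r + 1 := Nat.div_mul_cancel hr.add_one.two_dvd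
  have hq2 : (p ^ m + 1) / 2 * 2 = p ^ m + 1 := Nat.div_mul_cancel (hp.pow.add_one.two_dvd)
  have hfrob : (u ^ r + 1) ^ p ^ m = u ^ (r * p ^ m) + 1 := by
    rw [add_pow_expChar_pow, one_pow, ← pow_mul]
  calc (u ^ ((r + 1) / 2) * (u ^ r + 1) ^ ((p ^ m + 1) / 2)) ^ 2
      = u ^ (r + 1) * (u ^ r + 1) ^ (p ^ m + 1) := by
        rw [mul_pow, ← pow_mul, ← pow_mul, hr2, hq2]
    _ = u * (u ^ r + 1) * (u ^ r * (u ^ r + 1) ^ p ^ m) := by ring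
    _ = u * (u ^ r + 1) * (u ^ r + u ^ (r * (p ^ m + 1))) := by
        rw [hfrob]; ring

theorem stmt5_general (p : ℕ) [Fact p.Prime] (hp : 3 < p) (r : ℕ) (hr : Odd r)
    (n : ℕ) (hnodd : Odd n) :
    (∀ m, m ∣ n → Odd (n / m)) ∧
    ∃ S : Finset (RatFunc (ZMod p) × RatFunc (ZMod p)),
      S.card = n.divisors.card ∧
      ∀ q ∈ S, q.2 ^ 2 = q.1 * (q.1 ^ r + 1) *
        (q.1 ^ r + (RatFunc.X : RatFunc (ZMod p)) ^ (r * (p ^ n + 1))) := by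
  classical
  have hpodd : Odd p := (Fact.out : p.Prime).odd_of_ne_two (by omega)
  have hodd : ∀ m, m ∣ n → Odd (n / m) := fun m hm => hnodd.of_dvd_nat (Nat.div_dvd_of_dvd hm)
  have hdvd : ∀ m ∈ n.divisors, p ^ m + 1 ∣ p ^ n + 1 := fun m hm =>
    pow_add_one_dvd_pow_add_one_of_odd_div (Nat.dvd_of_mem_divisors hm)
      (hodd m (Nat.dvd_of_mem_divisors hm))
  let u : ℕ → RatFunc (ZMod p) := fun m => RatFunc.X ^ ((p ^ n + 1) / (p ^ m + 1))
  refine ⟨hodd, n.divisors.image fun m =>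
    (u m, u m ^ ((r + 1) / 2) * (u m ^ r + 1) ^ ((p ^ m + 1) / 2)), ?_, ?_⟩
  · refine Finset.card_image_of_injOn fun a ha b hb hab => ?_
    have he := RatFunc.X_pow_injective_s5 (ZMod p) (congrArg Prod.fst hab)
    rw [Nat.div_eq_iff_eq_of_dvd_dvd (by positivity) (hdvd a ha) (hdvd b hb)] at he
    exact Nat.pow_right_injective (Fact.out : p.Prime).two_le (Nat.add_right_cancel he)
  · intro q hq
    obtain ⟨m, hm, rfl⟩ := Finset.mem_image.mp hq
    have hX : (RatFunc.X : RatFunc (ZMod p)) ^ (r * (p ^ n + 1)) = u m ^ (r * (p ^ m + 1)) := by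
      rw [← pow_mul]
      congr 1
      nth_rewrite 1 [← Nat.div_mul_cancel (hdvd m hm)]
      ring
    rw [hX]
    exact sq_eq_mul_pow_add_one_mul_pow_add_pow_expChar_pow hpodd hr m (u m)

/-- If `n` is odd, then every divisor `m` of `n` satisfies that `n/m` is odd;
consequently for odd `n` with `k` distinct divisors, there are `k` distinct
`F_p(t)`-rational points on `y^2 = x (x^r + 1)(x^r + t^(r(p^n+1)))`. -/
theorem stmt5 (p : ℕ) [Fact p.Prime] (hp : 3 < p) (r : ℕ) (hr : Odd r)
    (hrp : Nat.Coprime r p) (n : ℕ) (hn : 0 < n) (hnodd : Odd n) :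
    (∀ m, m ∣ n → Odd (n / m)) ∧
    ∃ S : Finset (RatFunc (ZMod p) × RatFunc (ZMod p)),
      S.card = n.divisors.card ∧
      ∀ q ∈ S, q.2 ^ 2 = q.1 * (q.1 ^ r + 1) *
        (q.1 ^ r + (RatFunc.X : RatFunc (ZMod p)) ^ (r * (p ^ n + 1))) :=
  stmt5_general p hp r hr n hnodd
end

section
/- The involution σ(x,y) = (a/x, -a^{(r+1)/2} y/x^{r+1}) on the affine points of y^2 = x(x^r+1)(x^r+a^r) with x ≠ 0 has no fixed points, provided a is not a square in the base field times suitable unit, specifically when a ∉ F_p (a non-constant in F_p(t)). -/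
/-- An element of `RatFunc K` whose `r`-th power is `-1` (with `r > 0`) is a constant. -/
lemma aux_const_of_pow_eq_neg_one (K : Type*) [Field K] (x : RatFunc K) (r : ℕ)
    (hr : 0 < r) (h : x ^ r = -1) :
    x ∈ Set.range (algebraMap K (RatFunc K)) := by
  have hnd := RatFunc.num_div_denom x
  have hd : (algebraMap (Polynomial K) (RatFunc K)) x.denom ≠ 0 :=
    RatFunc.algebraMap_ne_zero (RatFunc.denom_ne_zero x)
  rw [← hnd, div_pow, div_eq_iff (pow_ne_zero _ hd)] at h
  have key2 : x.num ^ r = -(x.denom ^ r) := by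
    apply (RatFunc.algebraMap_injective K).eq_iff.mp
    push_cast [map_pow, map_neg]
    linear_combination h
  have hdvd : x.denom ∣ x.num ^ r := by
    rw [key2]
    exact Dvd.dvd.neg_right ⟨x.denom ^ (r - 1), by rw [← pow_succ']; congr 1; omega⟩
  have hcop : IsCoprime (x.num ^ r) x.denom := (RatFunc.isCoprime_num_denom x).pow_left
  have hud : IsUnit x.denom := hcop.isUnit_of_dvd' hdvd dvd_rfl
  have hun : IsUnit x.num := by
    have h1 : IsUnit (x.num ^ r) := by rw [key2]; exact (hud.pow r).neg
    have h2 : IsUnit (x.num * x.num ^ (r - 1)) := by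
      rw [← pow_succ', Nat.sub_add_cancel hr]; exact h1
    exact isUnit_of_mul_isUnit_left h2
  obtain ⟨cn, -, hcn⟩ := Polynomial.isUnit_iff.mp hun
  obtain ⟨cd, -, hcd⟩ := Polynomial.isUnit_iff.mp hud
  refine ⟨cn / cd, ?_⟩
  rw [← hnd, ← hcn, ← hcd]
  simp [RatFunc.algebraMap_C, div_div]

/-- The involution `σ(x, y) = (a/x, -a^((r+1)/2) y / x^(r+1))` on the affine
points of `y^2 = x (x^r + 1)(x^r + a^r)` with `x ≠ 0` has no fixed points
when `a` is non-constant in `F_p(t)`. -/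
theorem stmt8 (p : ℕ) [Fact p.Prime] (hp : 3 < p) (r : ℕ) (hr : Odd r)
    (hrp : Nat.Coprime r p) (a : RatFunc (ZMod p))
    (ha : a ∉ Set.range (algebraMap (ZMod p) (RatFunc (ZMod p))))
    (x y : RatFunc (ZMod p)) (hx : x ≠ 0)
    (hxy : y ^ 2 = x * (x ^ r + 1) * (x ^ r + a ^ r)) :
    ¬(a / x = x ∧ -a ^ ((r + 1) / 2) * y / x ^ (r + 1) = y) := by
  rintro ⟨h1, h2⟩
  rw [div_eq_iff hx] at h1
  have hax : a = x ^ 2 := by rw [h1]; ring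
  obtain ⟨k, hk⟩ := hr
  have hpow : a ^ ((r + 1) / 2) = x ^ (r + 1) := by
    rw [hax, ← pow_mul]
    congr 1
    omega
  rw [div_eq_iff (pow_ne_zero _ hx), hpow] at h2
  -- 2 ≠ 0 in RatFunc (ZMod p)
  have h2z : (2 : ZMod p) ≠ 0 := by
    have : ((2 : ℕ) : ZMod p) ≠ 0 := by
      rw [Ne, ZMod.natCast_eq_zero_iff]
      intro hdvd
      have := Nat.le_of_dvd (by norm_num) hdvd
      omega
    exact_mod_cast this
  have h2R : (2 : RatFunc (ZMod p)) ≠ 0 := by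
    have : (algebraMap (ZMod p) (RatFunc (ZMod p))) 2 ≠ 0 := (map_ne_zero _).mpr h2z
    rwa [map_ofNat] at this
  have hy : y = 0 := by
    have h2' : 2 * (y * x ^ (r + 1)) = 0 := by linear_combination -h2
    rcases mul_eq_zero.mp h2' with h | h
    · exact absurd h h2R
    · rcases mul_eq_zero.mp h with h | h
      · exact h
      · exact absurd h (pow_ne_zero _ hx)
  have hx2r : (x ^ 2) ^ r = x ^ r * x ^ r := by
    rw [← pow_mul, two_mul, pow_add]
  have h0 : (x * x ^ r) * (x ^ r + 1) ^ 2 = 0 := by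
    rw [hax, hy] at hxy
    rw [hx2r] at hxy
    linear_combination -hxy
  have hu : x ^ r = -1 := by
    rcases mul_eq_zero.mp h0 with h | h
    · rcases mul_eq_zero.mp h with h | h
      · exact absurd h hx
      · exact absurd h (pow_ne_zero _ hx)
    · have := pow_eq_zero_iff (n := 2) (by norm_num) |>.mp h
      linear_combination this
  have hrange := aux_const_of_pow_eq_neg_one (ZMod p) x r (by omega) hu
  obtain ⟨c, hc⟩ := hrange
  exact ha ⟨c ^ 2, by rw [map_pow, hc, hax]⟩
end

section
/- For n odd with k distinct prime factors, the number of divisors m of n is at least 2^k, and hence the curve y^2 = x(x^r+1)(x^r+t^{r(p^n+1)}) over F_p(t) has at least 2^k distinct rational points. -/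
lemma aux_pow_count (n : ℕ) (hn : n ≠ 0) :
    2 ^ n.primeFactors.card ≤ n.divisors.card := by
  rw [Nat.card_divisors hn]
  exact Finset.pow_card_le_prod _ _ _ fun q hq => by
    have : n.factorization q ≠ 0 :=
      Finsupp.mem_support_iff.mp (by simpa [Nat.support_factorization] using hq)
    omega

lemma aux_dvd (p m n : ℕ) (hm : m ∣ n) (hn : Odd n) (hn0 : 0 < n) :
    (p ^ m + 1) ∣ (p ^ n + 1) := by
  obtain ⟨c, rfl⟩ := hm
  have hc : Odd c := (Nat.odd_mul.mp hn).2
  have := hc.nat_add_dvd_pow_add_pow (p ^ m) 1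
  simpa [pow_mul] using this

lemma X_pow_inj (K : Type*) [Field K] :
    Function.Injective (fun a : ℕ => (RatFunc.X : RatFunc K) ^ a) := by
  intro a b h
  simp only at h
  rw [← RatFunc.algebraMap_X, ← map_pow, ← map_pow] at h
  have h2 := RatFunc.algebraMap_injective K h
  have := congrArg Polynomial.natDegree h2
  simpa using this

/-- For `n` odd with `k` distinct prime factors, the number of divisors of `n`
is at least `2^k`, and hence the curve
`y^2 = x (x^r + 1)(x^r + t^(r(p^n+1)))` over `F_p(t)` has at least `2^k`
distinct rational points. -/
theorem stmt16 (p : ℕ) [Fact p.Prime] (hp : 3 < p) (r : ℕ) (hr : Odd r)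
    (hrp : Nat.Coprime r p) (n : ℕ) (hn : 0 < n) (hnodd : Odd n) :
    2 ^ n.primeFactors.card ≤ n.divisors.card ∧
    ∃ S : Finset (RatFunc (ZMod p) × RatFunc (ZMod p)),
      2 ^ n.primeFactors.card ≤ S.card ∧
      ∀ q ∈ S, q.2 ^ 2 = q.1 * (q.1 ^ r + 1) *
        (q.1 ^ r + (RatFunc.X : RatFunc (ZMod p)) ^ (r * (p ^ n + 1))) := by
  classical
  have hcount := aux_pow_count n hn.ne'
  refine ⟨hcount, ?_⟩
  have hpodd : Odd p := (Fact.out (p := p.Prime)).odd_of_ne_two (by omega)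
  haveI hcharp : CharP (RatFunc (ZMod p)) p :=
    charP_of_injective_algebraMap (algebraMap (ZMod p) (RatFunc (ZMod p))).injective p
  -- the exponent function
  set e : ℕ → ℕ := fun m => (p ^ n + 1) / (p ^ m + 1) with he_def
  have hemul : ∀ m ∈ n.divisors, e m * (p ^ m + 1) = p ^ n + 1 := by
    intro m hm
    exact Nat.div_mul_cancel (aux_dvd p m n (Nat.dvd_of_mem_divisors hm) hnodd hn)
  -- the point map
  set f : ℕ → RatFunc (ZMod p) × RatFunc (ZMod p) := fun m =>
    (RatFunc.X ^ e m,
      RatFunc.X ^ (e m * (r + 1) / 2) * (1 + RatFunc.X ^ (r * e m)) ^ ((p ^ m + 1) / 2))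
    with hf_def
  refine ⟨n.divisors.image f, ?_, ?_⟩
  · -- cardinality
    rw [Finset.card_image_of_injOn]
    · exact hcount
    intro m1 h1 m2 h2 hfe
    have hx : (RatFunc.X : RatFunc (ZMod p)) ^ e m1 = RatFunc.X ^ e m2 :=
      congrArg Prod.fst hfe
    have he : e m1 = e m2 := X_pow_inj (ZMod p) hx
    have h1' := hemul m1 h1
    have h2' := hemul m2 h2
    rw [he] at h1'
    have hepos : 0 < e m2 := by
      rcases Nat.eq_zero_or_pos (e m2) with h0 | h0
      · rw [h0, zero_mul] at h2'; omega
      · exact h0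
    have : p ^ m1 = p ^ m2 := by
      have := h1'.trans h2'.symm
      have := Nat.eq_of_mul_eq_mul_left hepos this
      omega
    exact Nat.pow_right_injective (Fact.out (p := p.Prime)).two_le this
  · -- on the curve
    intro q hq
    obtain ⟨m, hm, rfl⟩ := Finset.mem_image.mp hq
    have he := hemul m hm
    have hq2 : 2 ∣ p ^ m + 1 := by
      obtain ⟨k, hk⟩ := hpodd.pow (n := m); omega
    have hr2 : 2 ∣ e m * (r + 1) := by
      refine Dvd.dvd.mul_left ?_ (e m)
      obtain ⟨k, hk⟩ := hr; omega
    show (RatFunc.X ^ (e m * (r + 1) / 2) *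
        (1 + RatFunc.X ^ (r * e m)) ^ ((p ^ m + 1) / 2)) ^ 2 =
      RatFunc.X ^ e m * (((RatFunc.X : RatFunc (ZMod p)) ^ e m) ^ r + 1) *
        (((RatFunc.X : RatFunc (ZMod p)) ^ e m) ^ r + RatFunc.X ^ (r * (p ^ n + 1)))
    have hexp : r * (p ^ n + 1) = r * e m + r * e m * p ^ m := by rw [← he]; ring
    have hfrob : (1 + (RatFunc.X : RatFunc (ZMod p)) ^ (r * e m)) ^ p ^ m =
        1 + ((RatFunc.X : RatFunc (ZMod p)) ^ (r * e m)) ^ p ^ m := by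
      rw [add_pow_char_pow, one_pow]
    have hq2' : (p ^ m + 1) / 2 * 2 = p ^ m + 1 := Nat.div_mul_cancel hq2
    have hr2' : e m * (r + 1) / 2 * 2 = e m * (r + 1) := Nat.div_mul_cancel hr2
    rw [mul_pow, ← pow_mul, ← pow_mul, hr2', hq2', hexp]
    have hsplit : (1 + (RatFunc.X : RatFunc (ZMod p)) ^ (r * e m)) ^ (p ^ m + 1) =
        (1 + RatFunc.X ^ (r * e m)) ^ p ^ m * (1 + RatFunc.X ^ (r * e m)) := by
      rw [pow_succ]
    rw [hsplit, hfrob, ← pow_mul, ← pow_mul]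
    have h1 : e m * (r + 1) = e m + e m * r := by ring
    have h2 : r * e m + r * e m * p ^ m = e m * r + r * e m * p ^ m := by ring
    have h3 : r * e m = e m * r := by ring
    rw [h1, h2, h3, pow_add, pow_add]
    ring
end
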